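/- arXiv:2203.10451 — 3 statements merged into one kernel-verified Lean document; each statement's English description precedes it below -/
import Mathlib

section
/- For every decision graph T satisfying the weak test-once property, every class c, and every instance δ: δ satisfies the NNF Δ^c[T] if and only if T assigns class c to instance δ. -/
/-- A discrete formula over variables `V`, where variable `v` has states `σ v`. -/
inductive DForm (V : Type) (σ : V → Type) : Type where
  | top : DForm V σ
  | bot : DForm V σ
  | state : (v : V) → σ v → DForm V σ
  | neg : DForm V σ → DForm V σ
  | conj : DForm V σ → DForm V σ → DForm V σ
  | disj : DForm V σ → DForm V σ → DForm V σ

namespace DForm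

variable {V : Type} {σ : V → Type}

/-- Evaluation of a discrete formula in a world `w`. -/
def eval [∀ v, DecidableEq (σ v)] (w : ∀ v, σ v) : DForm V σ → Bool
  | top => true
  | bot => false
  | state v s => decide (w v = s)
  | neg φ => !(φ.eval w)
  | conj φ ψ => φ.eval w && ψ.eval w
  | disj φ ψ => φ.eval w || ψ.eval w

/-- Two formulas are equivalent when they have the same models. -/
def equiv [∀ v, DecidableEq (σ v)] (φ ψ : DForm V σ) : Prop :=
  ∀ w : ∀ v, σ v, φ.eval w = ψ.eval w

/-- `φ ⊨ ψ`: every model of `φ` is a model of `ψ`. -/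
def entails [∀ v, DecidableEq (σ v)] (φ ψ : DForm V σ) : Prop :=
  ∀ w : ∀ v, σ v, φ.eval w = true → ψ.eval w = true

/-- Conditioning `Δ|x_i`: replace occurrences of `x_i` by `⊤` and of `x_j` (`j ≠ i`) by `⊥`. -/
def cond [DecidableEq V] [∀ v, DecidableEq (σ v)] (v : V) (s : σ v) :
    DForm V σ → DForm V σ
  | top => top
  | bot => bot
  | state u t =>
      if h : u = v then (if h ▸ t = s then top else bot) else state u t
  | neg φ => neg (φ.cond v s)
  | conj φ ψ => conj (φ.cond v s) (ψ.cond v s)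
  | disj φ ψ => disj (φ.cond v s) (ψ.cond v s)

/-- Universal quantification of state `x_i`:
`∀x_i·Δ := (Δ|x_i) ∧ ⋀_{j≠i} (x_i ∨ Δ|x_j)`. -/
noncomputable def quant [DecidableEq V] [∀ v, DecidableEq (σ v)] [∀ v, Fintype (σ v)]
    (v : V) (s : σ v) (Δ : DForm V σ) : DForm V σ :=
  ((Finset.univ.filter (fun j => j ≠ s)).toList).foldr
    (fun j acc => conj (disj (state v s) (Δ.cond v j)) acc) (Δ.cond v s)

/-- The set of variables occurring in a formula. -/
def vars : DForm V σ → Set V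
  | top => ∅
  | bot => ∅
  | state u _ => {u}
  | neg φ => φ.vars
  | conj φ ψ => φ.vars ∪ ψ.vars
  | disj φ ψ => φ.vars ∪ ψ.vars

/-- Whether state `x_i` (the positive literal) occurs in the formula. -/
def stateOccurs (v : V) (s : σ v) : DForm V σ → Prop
  | top => False
  | bot => False
  | state u t => ∃ h : u = v, h ▸ t = s
  | neg φ => φ.stateOccurs v s
  | conj φ ψ => φ.stateOccurs v s ∨ ψ.stateOccurs v s
  | disj φ ψ => φ.stateOccurs v s ∨ ψ.stateOccurs v s

/-- An NNF only negates states (literals). -/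
def isNNF : DForm V σ → Prop
  | top => True
  | bot => True
  | state _ _ => True
  | neg (state _ _) => True
  | neg _ => False
  | conj φ ψ => φ.isNNF ∧ ψ.isNNF
  | disj φ ψ => φ.isNNF ∧ ψ.isNNF

/-- A positive NNF contains no negation at all. -/
def isPositive : DForm V σ → Prop
  | top => True
  | bot => True
  | state _ _ => True
  | neg _ => False
  | conj φ ψ => φ.isPositive ∧ ψ.isPositive
  | disj φ ψ => φ.isPositive ∧ ψ.isPositive

/-- A monotone NNF is positive and has at most one state per variable. -/
def monotone (Δ : DForm V σ) : Prop :=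
  Δ.isPositive ∧ ∀ (v : V) (s t : σ v), Δ.stateOccurs v s → Δ.stateOccurs v t → s = t

/-- ∨-decomposability: disjuncts of every disjunction share no variables. -/
def orDecomposable : DForm V σ → Prop
  | top => True
  | bot => True
  | state _ _ => True
  | neg φ => φ.orDecomposable
  | conj φ ψ => φ.orDecomposable ∧ ψ.orDecomposable
  | disj φ ψ => φ.vars ∩ ψ.vars = ∅ ∧ φ.orDecomposable ∧ ψ.orDecomposable

/-- ∧-decomposability: conjuncts of every conjunction share no variables. -/
def andDecomposable : DForm V σ → Prop
  | top => True
  | bot => True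
  | state _ _ => True
  | neg φ => φ.andDecomposable
  | conj φ ψ => φ.vars ∩ ψ.vars = ∅ ∧ φ.andDecomposable ∧ ψ.andDecomposable
  | disj φ ψ => φ.andDecomposable ∧ ψ.andDecomposable

end DForm

variable {V : Type} {σ : V → Type}

open DForm

/-- Disjunction of the states in a list: `⋁_{x_k ∈ l} x_k`. -/
def stateDisj (v : V) : List (σ v) → DForm V σ
  | [] => DForm.bot
  | s :: l => DForm.disj (DForm.state v s) (stateDisj v l)

/-- Conjunction of a list of formulas. -/
def listConj : List (DForm V σ) → DForm V σ
  | [] => DForm.top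
  | φ :: l => DForm.conj φ (listConj l)

/-- A decision graph (or tree): leaves are labeled with classes, an internal node
tests a variable `v` and has `n` outgoing edges labeled with sets of states of `v`. -/
inductive DGraph (V : Type) (σ : V → Type) (C : Type) : Type where
  | leaf : C → DGraph V σ C
  | node : (v : V) → (n : ℕ) → (Fin n → Finset (σ v)) → (Fin n → DGraph V σ C) → DGraph V σ C

namespace DGraph

variable {C : Type}

/-- Classification of an instance by a decision graph: follow the unique edge
whose state set contains the state of the tested variable. -/
def classify [∀ v, DecidableEq (σ v)] (δ : ∀ u, σ u) : DGraph V σ C → Option C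
  | .leaf c => some c
  | .node v n sets ch =>
    match (List.finRange n).find? (fun j => decide (δ v ∈ sets j)) with
    | some j => (ch j).classify δ
    | none => none

/-- The weak test-once property, relative to the states still available for each
variable (initially all states): at a node testing `v`, there are at least two
edges and the (nonempty) edge sets partition the available states of `v`; below
the edge `(v, S_j, T_j)` only the states in `S_j` remain available for `v`. -/
def WTO [DecidableEq V] : (∀ u : V, Finset (σ u)) → DGraph V σ C → Prop
  | _, .leaf _ => True
  | avail, .node v n sets ch =>
      2 ≤ n ∧
      (∀ j, (sets j).Nonempty) ∧
      (∀ j k, j ≠ k → Disjoint (sets j) (sets k)) ∧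
      (∀ s : σ v, s ∈ avail v ↔ ∃ j, s ∈ sets j) ∧
      ∀ j, (ch j).WTO (Function.update avail v (sets j))

/-- The NNF `Δ^c[T]` capturing the instances that `T` assigns to class `c`:
`⊤`/`⊥` at leaves, and `⋀_j (Δ^c[T_j] ∨ ⋁_{x_i ∉ S_j} x_i)` at a node with
edges `(X, S_j, T_j)`. -/
noncomputable def deltaNNF [DecidableEq C] [∀ v, DecidableEq (σ v)] [∀ v, Fintype (σ v)]
    (c : C) : DGraph V σ C → DForm V σ
  | .leaf c' => if c' = c then DForm.top else DForm.bot
  | .node v n sets ch =>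
      listConj ((List.finRange n).map (fun j =>
        DForm.disj ((ch j).deltaNNF c) (stateDisj v ((sets j)ᶜ).toList)))

/-- The closed-form complete reason `Γ^c[T]` for instance `δ` and class `c`:
`⊤`/`⊥` at leaves, and `⋀_j (Γ^c[T_j] ∨ ℓ_j)` at a node with edges `(X, S_j, T_j)`,
where `ℓ_j = δ[X]` if `δ[X] ∈ S_k` for some `k ≠ j` and `ℓ_j = ⊥` otherwise. -/
noncomputable def gammaNNF [DecidableEq C] [∀ v, DecidableEq (σ v)] [∀ v, Fintype (σ v)]
    (δ : ∀ u, σ u) (c : C) : DGraph V σ C → DForm V σ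
  | .leaf c' => if c' = c then DForm.top else DForm.bot
  | .node v n sets ch =>
      listConj ((List.finRange n).map (fun j =>
        DForm.disj ((ch j).gammaNNF δ c)
          (if ∃ k, k ≠ j ∧ δ v ∈ sets k then DForm.state v (δ v) else DForm.bot)))

/-- Number of leaves labeled with a class different from `c`. -/
def badLeaves [DecidableEq C] (c : C) : DGraph V σ C → ℕ
  | .leaf c' => if c' = c then 0 else 1
  | .node _ n _ ch => ∑ j : Fin n, (ch j).badLeaves c

end DGraph

lemma listConj_eval_iff [∀ v, DecidableEq (σ v)] (δ : ∀ u, σ u) (l : List (DForm V σ)) :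
    (listConj l).eval δ = true ↔ ∀ φ ∈ l, φ.eval δ = true := by
  induction l with
  | nil => simp [listConj, DForm.eval]
  | cons φ l ih => simp [listConj, DForm.eval, ih]

lemma stateDisj_eval_iff [∀ v, DecidableEq (σ v)] (δ : ∀ u, σ u) (v : V) (l : List (σ v)) :
    (stateDisj v l).eval δ = true ↔ δ v ∈ l := by
  induction l with
  | nil => simp [stateDisj, DForm.eval]
  | cons s l ih => simp [stateDisj, DForm.eval, ih]

lemma deltaNNF_correct_aux {C : Type} [DecidableEq V] [DecidableEq C]
    [∀ v, DecidableEq (σ v)] [∀ v, Fintype (σ v)]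
    (c : C) (δ : ∀ u, σ u) (T : DGraph V σ C) :
    ∀ avail : ∀ u : V, Finset (σ u), T.WTO avail → (∀ u, δ u ∈ avail u) →
      ((T.deltaNNF c).eval δ = true ↔ T.classify δ = some c) := by
  induction T with
  | leaf c' =>
    intro avail _ _
    by_cases h : c' = c <;> simp [DGraph.deltaNNF, DGraph.classify, h, DForm.eval]
  | node v n sets ch ih =>
    intro avail hw hδ
    obtain ⟨h2, hne, hdisj, hpart, hch⟩ := hw
    obtain ⟨j, hj⟩ := (hpart (δ v)).mp (hδ v)
    have huniq : ∀ k, δ v ∈ sets k → k = j := by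
      intro k hk
      by_contra hkj
      exact (Finset.disjoint_left.mp (hdisj k j hkj)) hk hj
    have hfind : (List.finRange n).find? (fun k => decide (δ v ∈ sets k)) = some j := by
      cases hcase : (List.finRange n).find? (fun k => decide (δ v ∈ sets k)) with
      | none =>
        exfalso
        have := List.find?_eq_none.mp hcase j (List.mem_finRange j)
        simp at this
        exact this hj
      | some k =>
        have hk := List.find?_some hcase
        simp at hk
        exact congrArg some (huniq k hk)
    have hclass : DGraph.classify δ (DGraph.node v n sets ch) = (ch j).classify δ := by
      simp [DGraph.classify, hfind]
    rw [hclass]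
    have hIH := ih j (Function.update avail v (sets j)) (hch j) (by
      intro u
      by_cases h : u = v
      · subst h; simp [hj]
      · simp [Function.update_of_ne h, hδ u])
    rw [← hIH]
    rw [DGraph.deltaNNF, listConj_eval_iff]
    constructor
    · intro hall
      have := hall _ (List.mem_map.mpr ⟨j, List.mem_finRange j, rfl⟩)
      simp only [DForm.eval, Bool.or_eq_true] at this
      rcases this with h | h
      · exact h
      · rw [stateDisj_eval_iff] at h
        simp at h
        exact absurd hj h
    · intro hj'
      intro φ hφ
      obtain ⟨k, _, rfl⟩ := List.mem_map.mp hφ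
      simp only [DForm.eval, Bool.or_eq_true]
      by_cases hkj : k = j
      · subst hkj; exact Or.inl hj'
      · right
        rw [stateDisj_eval_iff]
        simp
        intro hmem
        exact hkj (huniq k hmem)

/-- An instance satisfies `Δ^c[T]` iff the decision graph `T` assigns class `c` to it. -/
theorem deltaNNF_correct {C : Type} [DecidableEq V] [DecidableEq C]
    [∀ v, DecidableEq (σ v)] [∀ v, Fintype (σ v)]
    (T : DGraph V σ C) (hT : T.WTO (fun _ => Finset.univ))
    (c : C) (δ : ∀ u, σ u) :
    (T.deltaNNF c).eval δ = true ↔ T.classify δ = some c := by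
  exact deltaNNF_correct_aux c δ T _ hT (fun u => Finset.mem_univ _)
end

section
/- Let T be a decision graph satisfying the weak test-once property, δ be an instance assigned class c by T, and δ[X] be the state of variable X in δ. Then the complete reason ∀δ·Δ^c[T] is equivalent to the NNF Γ^c[T] defined inductively by: Γ^c[T] = ⊤ if T is a leaf labeled c; Γ^c[T] = ⊥ if T is a leaf labeled c' ≠ c; and Γ^c[T] = ⋀_j (Γ^c[T_j] ∨ ℓ_j) if T has edges (X,S_j,T_j), where ℓ_j = δ[X] if δ[X] ∈ S_k for some k ≠ j, and ℓ_j = ⊥ otherwise. -/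
variable {V : Type} {σ : V → Type}

open DForm

/-- The complete reason `∀δ·Δ` for the decision on instance `δ`: universally
quantify every state of the instance `δ` from `Δ`. -/
noncomputable def completeReason [DecidableEq V] [Fintype V]
    [∀ v, DecidableEq (σ v)] [∀ v, Fintype (σ v)]
    (δ : ∀ u, σ u) (Δ : DForm V σ) : DForm V σ :=
  (Finset.univ : Finset V).toList.foldr (fun v acc => DForm.quant v (δ v) acc) Δ

/-!
Both sides are characterised semantically. Quantifying the states of `δ` turns `Δ` into
"`Δ` holds at every `w'` that keeps each state `δ[X]` that `w` has", and `Δ^c[T]` holds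
exactly at the instances that `T` does not assign to a class other than `c`. Hence
`∀δ·Δ^c[T]` holds at `w` iff no such `w'` reaches a leaf of another class, and `Γ^c[T]` is
shown to say the same by induction on `T`. At a node testing `X` with `w[X] = δ[X]`, every
such `w'` follows the edge containing `δ[X]`, which is the only conjunct of `Γ^c[T]` whose
literal `ℓ_j` is false. If `w[X] ≠ δ[X]`, the `w'` may follow any edge; a `w'` that reaches a
leaf of `T_j` although `w'[X] ∉ S_j` reaches the same leaf after moving `w'[X]` into `S_j`,
because by weak test-once `T_j` never tests `X` outside `S_j`.
-/

namespace DForm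

variable [∀ v, DecidableEq (σ v)]

theorem eval_cond [DecidableEq V] (v : V) (s : σ v) (Φ : DForm V σ) (w : ∀ u, σ u) :
    (Φ.cond v s).eval w = Φ.eval (Function.update w v s) := by
  induction Φ with
  | state u t =>
    by_cases h : u = v
    · subst h
      by_cases hts : t = s
      · simp [cond, eval, hts]
      · simp [cond, eval, hts, Ne.symm hts]
    · simp [cond, eval, h]
  | _ => simp_all [cond, eval]

theorem eval_foldr_conj {α : Type*} (f : α → DForm V σ) (b : DForm V σ) (l : List α)
    (w : ∀ u, σ u) :
    (l.foldr (fun a acc => conj (f a) acc) b).eval w = true ↔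
      b.eval w = true ∧ ∀ a ∈ l, (f a).eval w = true := by
  induction l with
  | nil => simp
  | cons a l ih => simp [eval, ih, and_left_comm]

theorem eval_quant [DecidableEq V] [∀ v, Fintype (σ v)] (v : V) (s : σ v) (Δ : DForm V σ)
    (w : ∀ u, σ u) :
    (quant v s Δ).eval w = true ↔
      ∀ t : σ v, (w v = s → t = s) → Δ.eval (Function.update w v t) = true := by
  simp only [quant, eval_foldr_conj, Finset.mem_toList, Finset.mem_filter, Finset.mem_univ,
    true_and, eval, Bool.or_eq_true, decide_eq_true_eq, eval_cond]
  constructor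
  · rintro ⟨hs, hne⟩ t ht
    by_cases hts : t = s
    · exact hts ▸ hs
    · exact (hne t hts).resolve_left (mt ht hts)
  · intro h
    exact ⟨h s fun _ => rfl, fun t _ => or_iff_not_imp_left.2 fun hws => h t (absurd · hws)⟩

end DForm

section Semantics

variable [∀ v, DecidableEq (σ v)]

theorem eval_listConj_map_finRange {n : ℕ} (f : Fin n → DForm V σ) (w : ∀ u, σ u) :
    (listConj ((List.finRange n).map f)).eval w = true ↔ ∀ j, (f j).eval w = true := by
  suffices ∀ l : List (DForm V σ), (listConj l).eval w = true ↔ ∀ φ ∈ l, φ.eval w = true by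
    simp [this]
  intro l
  induction l with
  | nil => simp [listConj, eval]
  | cons φ l ih => simp [listConj, eval, ih]

theorem eval_stateDisj (v : V) (l : List (σ v)) (w : ∀ u, σ u) :
    (stateDisj v l).eval w = true ↔ w v ∈ l := by
  induction l with
  | nil => simp [stateDisj, eval]
  | cons s l ih => simp [stateDisj, eval, ih]

theorem eval_foldr_quant [DecidableEq V] [∀ v, Fintype (σ v)] (δ : ∀ u, σ u) (L : List V)
    (Δ : DForm V σ) (w : ∀ u, σ u) :
    (L.foldr (fun v acc => quant v (δ v) acc) Δ).eval w = true ↔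
      ∀ w' : ∀ u, σ u, (∀ u ∉ L, w' u = w u) → (∀ u, w u = δ u → w' u = δ u) →
        Δ.eval w' = true := by
  induction L generalizing w with
  | nil =>
    simp only [List.foldr_nil, List.not_mem_nil, not_false_eq_true, forall_const]
    exact ⟨fun h w' hw' _ => funext hw' ▸ h, fun h => h w (fun _ => rfl) fun _ h => h⟩
  | cons v L ih =>
    simp only [List.foldr_cons, eval_quant, ih]
    constructor
    · intro h w' hout hkeep
      refine h (w' v) (hkeep v) w' (fun u hu => ?_) (fun u hu => ?_)
      · by_cases huv : u = v
        · subst huv; simp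
        · simp [huv, hout u (by simp [huv, hu])]
      · by_cases huv : u = v
        · subst huv; simpa using hu
        · exact hkeep u (by simpa [huv] using hu)
    · intro h t ht w' hout hkeep
      refine h w' (fun u hu => ?_) (fun u hu => ?_)
      · have huv : u ≠ v := fun h => hu (h ▸ List.mem_cons_self)
        simp [hout u (fun h => hu (List.mem_cons_of_mem v h)), huv]
      · by_cases huv : u = v
        · subst huv; exact hkeep u (by simp [ht hu])
        · exact hkeep u (by simp [huv, hu])

theorem eval_completeReason [DecidableEq V] [Fintype V] [∀ v, Fintype (σ v)]
    (δ : ∀ u, σ u) (Δ : DForm V σ) (w : ∀ u, σ u) :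
    (completeReason δ Δ).eval w = true ↔
      ∀ w' : ∀ u, σ u, (∀ u, w u = δ u → w' u = δ u) → Δ.eval w' = true := by
  simp [completeReason, eval_foldr_quant]

end Semantics

namespace DGraph

variable {C : Type} [∀ v, DecidableEq (σ v)]

section Classify

variable {v : V} {n : ℕ} {sets : Fin n → Finset (σ v)} (ch : Fin n → DGraph V σ C)
  {w : ∀ u, σ u}

theorem classify_node_of_mem (hdisj : ∀ j k, j ≠ k → Disjoint (sets j) (sets k)) {m : Fin n}
    (hm : w v ∈ sets m) :
    (node v n sets ch).classify w = (ch m).classify w := by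
  cases h : (List.finRange n).find? (fun j => decide (w v ∈ sets j)) with
  | none => simpa [hm] using List.find?_eq_none.1 h m (List.mem_finRange m)
  | some j =>
    have hj : w v ∈ sets j := by simpa using List.find?_some h
    obtain rfl : j = m := by
      by_contra hjm
      exact Finset.disjoint_left.1 (hdisj j m hjm) hj hm
    simp [classify, h]

theorem classify_node_eq_some_iff (hdisj : ∀ j k, j ≠ k → Disjoint (sets j) (sets k))
    {c' : C} :
    (node v n sets ch).classify w = some c' ↔ ∃ m, w v ∈ sets m ∧ (ch m).classify w = some c' := by
  constructor
  · intro h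
    obtain ⟨m, hm⟩ : ∃ m, w v ∈ sets m := by
      by_contra! hnone
      have hfind : (List.finRange n).find? (fun j => decide (w v ∈ sets j)) = none :=
        List.find?_eq_none.2 fun j _ => by simpa using hnone j
      simp [classify, hfind] at h
    exact ⟨m, hm, classify_node_of_mem ch hdisj hm ▸ h⟩
  · rintro ⟨m, hm, h⟩
    rw [classify_node_of_mem ch hdisj hm, h]

end Classify

theorem classify_update_of_not_mem_avail [DecidableEq V] {avail : ∀ u, Finset (σ u)}
    {T : DGraph V σ C} (hT : T.WTO avail) {v : V} {w : ∀ u, σ u} (hw : w v ∉ avail v)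
    {c' : C} (h : T.classify w = some c') (s : σ v) :
    T.classify (Function.update w v s) = some c' := by
  induction T generalizing avail with
  | leaf => simpa [classify] using h
  | node u n sets ch ih =>
    obtain ⟨-, -, hdisj, hpart, hch⟩ := hT
    obtain ⟨m, hm, hcm⟩ := (classify_node_eq_some_iff ch hdisj).1 h
    have huv : u ≠ v := by
      rintro rfl
      exact hw ((hpart _).2 ⟨m, hm⟩)
    rw [classify_node_of_mem ch hdisj (by rwa [Function.update_of_ne huv])]
    exact ih m (hch m) (by rwa [Function.update_of_ne huv.symm]) hcm

theorem exists_classify_node_update_eq_some [DecidableEq V] {avail : ∀ u, Finset (σ u)}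
    {v : V} {n : ℕ} {sets : Fin n → Finset (σ v)} {ch : Fin n → DGraph V σ C}
    (hT : (node v n sets ch).WTO avail) {j : Fin n} {w : ∀ u, σ u} {c' : C}
    (h : (ch j).classify w = some c') :
    ∃ s, (node v n sets ch).classify (Function.update w v s) = some c' := by
  obtain ⟨-, hne, hdisj, -, hch⟩ := hT
  by_cases hin : w v ∈ sets j
  · exact ⟨w v, by rwa [Function.update_eq_self, classify_node_of_mem ch hdisj hin]⟩
  obtain ⟨s, hs⟩ := hne j
  refine ⟨s, ?_⟩
  rw [classify_node_of_mem ch hdisj (by simpa using hs)]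
  exact classify_update_of_not_mem_avail (hch j) (by simpa using hin) h s

variable [DecidableEq C] [∀ v, Fintype (σ v)]

theorem eval_deltaNNF [DecidableEq V] (c : C) {avail : ∀ u, Finset (σ u)} {T : DGraph V σ C}
    (hT : T.WTO avail) (w : ∀ u, σ u) :
    (T.deltaNNF c).eval w = true ↔ ∀ c' ∈ T.classify w, c' = c := by
  induction T generalizing avail with
  | leaf c' => by_cases h : c' = c <;> simp [deltaNNF, classify, eval, h]
  | node v n sets ch ih =>
    obtain ⟨-, -, hdisj, -, hch⟩ := hT
    have ih' := fun j => ih j (hch j)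
    simp only [deltaNNF, eval_listConj_map_finRange, eval, Bool.or_eq_true, eval_stateDisj,
      Finset.mem_toList, Finset.mem_compl, ih', Option.mem_def,
      classify_node_eq_some_iff ch hdisj]
    constructor
    · rintro h c' ⟨m, hm, hcm⟩
      exact (h m).resolve_right (not_not.2 hm) c' hcm
    · intro h j
      by_cases hj : w v ∈ sets j
      · exact Or.inl fun c' hc' => h c' ⟨j, hj, hc'⟩
      · exact Or.inr hj

theorem eval_gammaNNF [DecidableEq V] (δ : ∀ u, σ u) (c : C) {avail : ∀ u, Finset (σ u)}
    {T : DGraph V σ C} (hT : T.WTO avail) {w : ∀ u, σ u}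
    (hw : ∀ u, w u = δ u → δ u ∈ avail u) :
    (T.gammaNNF δ c).eval w = true ↔
      ∀ w' : ∀ u, σ u, (∀ u, w u = δ u → w' u = δ u) → ∀ c' ∈ T.classify w', c' = c := by
  induction T generalizing avail with
  | leaf c' =>
    by_cases h : c' = c
    · simp [gammaNNF, classify, eval, h]
    · simpa [gammaNNF, classify, eval, h] using ⟨w, fun _ => id⟩
  | node v n sets ch ih =>
    have ⟨_, _, hdisj, hpart, hch⟩ := hT
    have hlit : ∀ j, (if ∃ k, k ≠ j ∧ δ v ∈ sets k then state v (δ v) else bot).eval w = true ↔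
        (∃ k, k ≠ j ∧ δ v ∈ sets k) ∧ w v = δ v := fun j => by
      split_ifs <;> simp [eval, *]
    simp only [gammaNNF, eval_listConj_map_finRange, eval, Bool.or_eq_true, hlit]
    have hw_edge : ∀ j, (w v = δ v → δ v ∈ sets j) →
        ∀ u, w u = δ u → δ u ∈ Function.update avail v (sets j) u := by
      intro j hj u hu
      by_cases huv : u = v
      · subst huv
        simpa using hj hu
      · simpa [huv] using hw u hu
    by_cases hv : w v = δ v
    · obtain ⟨i, hi⟩ := (hpart (δ v)).1 (hw v hv)
      have hother : ∀ j, (∃ k, k ≠ j ∧ δ v ∈ sets k) ↔ j ≠ i := by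
        refine fun j => ⟨?_, fun hji => ⟨i, hji.symm, hi⟩⟩
        rintro ⟨k, hkj, hk⟩ rfl
        exact Finset.disjoint_left.1 (hdisj k j hkj) hk hi
      simp only [hother, hv, and_true, or_iff_not_imp_right, not_not, forall_eq]
      rw [ih i (hch i) (hw_edge i fun _ => hi)]
      refine forall₂_congr fun w' hw' => ?_
      rw [classify_node_of_mem ch hdisj (show w' v ∈ sets i from hw' v hv ▸ hi)]
    · simp only [hv, and_false, or_false]
      rw [forall_congr' fun j => ih j (hch j) (hw_edge j (absurd · hv))]
      constructor
      · rintro h w' hw' c' hc'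
        obtain ⟨m, -, hm⟩ := (classify_node_eq_some_iff ch hdisj).1 hc'
        exact h m w' hw' c' hm
      · intro h j w' hw' c' hc'
        obtain ⟨s, hs⟩ := exists_classify_node_update_eq_some hT hc'
        refine h (Function.update w' v s) (fun u hu => ?_) c' hs
        simpa [show u ≠ v by rintro rfl; exact hv hu] using hw' u hu

end DGraph

theorem completeReason_eq_gammaNNF_general {C : Type} [DecidableEq V] [Fintype V] [DecidableEq C]
    [∀ v, DecidableEq (σ v)] [∀ v, Fintype (σ v)]
    (T : DGraph V σ C) (hT : T.WTO (fun _ => Finset.univ))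
    (δ : ∀ u, σ u) (c : C) :
    DForm.equiv (completeReason δ (T.deltaNNF c)) (T.gammaNNF δ c) := by
  intro w
  rw [Bool.eq_iff_iff, eval_completeReason,
    DGraph.eval_gammaNNF δ c hT fun _ _ => Finset.mem_univ _]
  simp only [DGraph.eval_deltaNNF c hT]

/-- Closed form for the complete reason of a decision graph: `∀δ·Δ^c[T] ≡ Γ^c[T]`. -/
theorem completeReason_eq_gammaNNF {C : Type} [DecidableEq V] [Fintype V] [DecidableEq C]
    [∀ v, DecidableEq (σ v)] [∀ v, Fintype (σ v)]
    (T : DGraph V σ C) (hT : T.WTO (fun _ => Finset.univ))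
    (δ : ∀ u, σ u) (c : C) (hc : T.classify δ = some c) :
    DForm.equiv (completeReason δ (T.deltaNNF c)) (T.gammaNNF δ c) :=
  completeReason_eq_gammaNNF_general T hT δ c
end

section
/- Let T be a decision graph satisfying the weak test-once property and δ be an instance assigned class c by T. Then the NNF Γ^c[T] (the closed-form complete reason, defined by: ⊤ if T is a leaf labeled c; ⊥ if T is a leaf labeled c' ≠ c; ⋀_j (Γ^c[T_j] ∨ ℓ_j) if T has edges (X,S_j,T_j), where ℓ_j = δ[X] if δ[X] ∈ S_k for some k ≠ j and ℓ_j = ⊥ otherwise) is a monotone, ∨-decomposable NNF. -/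
variable {V : Type} {σ : V → Type}

open DForm

section Helpers

lemma listConj_isNNF : ∀ l : List (DForm V σ), (∀ φ ∈ l, φ.isNNF) → (listConj l).isNNF
  | [], _ => trivial
  | φ :: l, h =>
      ⟨h φ (by simp), listConj_isNNF l (fun ψ hψ => h ψ (by simp [hψ]))⟩

lemma listConj_isPositive : ∀ l : List (DForm V σ), (∀ φ ∈ l, φ.isPositive) →
    (listConj l).isPositive
  | [], _ => trivial
  | φ :: l, h =>
      ⟨h φ (by simp), listConj_isPositive l (fun ψ hψ => h ψ (by simp [hψ]))⟩

lemma listConj_orDecomposable : ∀ l : List (DForm V σ), (∀ φ ∈ l, φ.orDecomposable) →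
    (listConj l).orDecomposable
  | [], _ => trivial
  | φ :: l, h =>
      ⟨h φ (by simp), listConj_orDecomposable l (fun ψ hψ => h ψ (by simp [hψ]))⟩

lemma listConj_stateOccurs {v : V} {s : σ v} :
    ∀ l : List (DForm V σ), (listConj l).stateOccurs v s → ∃ φ ∈ l, φ.stateOccurs v s
  | [], h => absurd h (by simp [listConj, DForm.stateOccurs])
  | φ :: l, h => by
      rcases h with h | h
      · exact ⟨φ, by simp, h⟩
      · obtain ⟨ψ, hψ, h'⟩ := listConj_stateOccurs l h
        exact ⟨ψ, by simp [hψ], h'⟩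

lemma listConj_vars {u : V} :
    ∀ l : List (DForm V σ), u ∈ (listConj l).vars → ∃ φ ∈ l, u ∈ φ.vars
  | [], h => absurd h (by simp [listConj, DForm.vars])
  | φ :: l, h => by
      rcases h with h | h
      · exact ⟨φ, by simp, h⟩
      · obtain ⟨ψ, hψ, h'⟩ := listConj_vars l h
        exact ⟨ψ, by simp [hψ], h'⟩

variable {C : Type} [DecidableEq V] [DecidableEq C]
    [∀ v, DecidableEq (σ v)] [∀ v, Fintype (σ v)]

lemma gamma_stateOccurs (δ : ∀ u, σ u) (c : C) :
    ∀ (T : DGraph V σ C) (v : V) (s : σ v),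
      (T.gammaNNF δ c).stateOccurs v s → s = δ v := by
  intro T
  induction T with
  | leaf c' =>
      intro v s h
      simp only [DGraph.gammaNNF] at h
      split at h <;> exact absurd h (by simp [DForm.stateOccurs])
  | node w n sets ch ih =>
      intro v s h
      simp only [DGraph.gammaNNF] at h
      obtain ⟨φ, hφmem, hφ⟩ := listConj_stateOccurs _ h
      simp only [List.mem_map] at hφmem
      obtain ⟨j, -, rfl⟩ := hφmem
      rcases hφ with h | h
      · exact ih j v s h
      · split at h
        · obtain ⟨rfl, h2⟩ := h
          exact h2.symm
        · exact absurd h (by simp [DForm.stateOccurs])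

lemma gamma_vars (δ : ∀ u, σ u) (c : C) :
    ∀ (T : DGraph V σ C) (avail : ∀ u : V, Finset (σ u)), T.WTO avail →
      ∀ u, u ∈ (T.gammaNNF δ c).vars → δ u ∈ avail u := by
  intro T
  induction T with
  | leaf c' =>
      intro avail _ u h
      simp only [DGraph.gammaNNF] at h
      split at h <;> exact absurd h (by simp [DForm.vars])
  | node w n sets ch ih =>
      intro avail hW u h
      obtain ⟨-, -, -, h4, h5⟩ := hW
      simp only [DGraph.gammaNNF] at h
      obtain ⟨φ, hφmem, hφ⟩ := listConj_vars _ h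
      simp only [List.mem_map] at hφmem
      obtain ⟨j, -, rfl⟩ := hφmem
      rcases hφ with h | h
      · have := ih j _ (h5 j) u h
        by_cases huw : u = w
        · subst huw
          rw [Function.update_self] at this
          exact (h4 (δ u)).mpr ⟨j, this⟩
        · rwa [Function.update_of_ne huw] at this
      · split at h
        · next hk =>
            obtain ⟨k, -, hk2⟩ := hk
            have : u = w := by simpa [DForm.vars] using h
            subst this
            exact (h4 (δ u)).mpr ⟨k, hk2⟩
        · exact absurd h (by simp [DForm.vars])

lemma gamma_isNNF (δ : ∀ u, σ u) (c : C) :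
    ∀ T : DGraph V σ C, (T.gammaNNF δ c).isNNF := by
  intro T
  induction T with
  | leaf c' => simp only [DGraph.gammaNNF]; split <;> trivial
  | node w n sets ch ih =>
      simp only [DGraph.gammaNNF]
      refine listConj_isNNF _ ?_
      intro φ hφ
      simp only [List.mem_map] at hφ
      obtain ⟨j, -, rfl⟩ := hφ
      exact ⟨ih j, by split <;> trivial⟩

lemma gamma_isPositive (δ : ∀ u, σ u) (c : C) :
    ∀ T : DGraph V σ C, (T.gammaNNF δ c).isPositive := by
  intro T
  induction T with
  | leaf c' => simp only [DGraph.gammaNNF]; split <;> trivial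
  | node w n sets ch ih =>
      simp only [DGraph.gammaNNF]
      refine listConj_isPositive _ ?_
      intro φ hφ
      simp only [List.mem_map] at hφ
      obtain ⟨j, -, rfl⟩ := hφ
      exact ⟨ih j, by split <;> trivial⟩

lemma gamma_orDecomposable (δ : ∀ u, σ u) (c : C) :
    ∀ (T : DGraph V σ C) (avail : ∀ u : V, Finset (σ u)), T.WTO avail →
      (T.gammaNNF δ c).orDecomposable := by
  intro T
  induction T with
  | leaf c' => intro avail _; simp only [DGraph.gammaNNF]; split <;> trivial
  | node w n sets ch ih =>
      intro avail hW
      obtain ⟨-, -, h3, -, h5⟩ := hW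
      simp only [DGraph.gammaNNF]
      refine listConj_orDecomposable _ ?_
      intro φ hφ
      simp only [List.mem_map] at hφ
      obtain ⟨j, -, rfl⟩ := hφ
      refine ⟨?_, ih j _ (h5 j), by split <;> trivial⟩
      split
      · next hk =>
          obtain ⟨k, hkj, hk2⟩ := hk
          ext u
          simp only [Set.mem_inter_iff, Set.mem_empty_iff_false, iff_false, not_and]
          intro hu hu2
          have huw : u = w := by simpa [DForm.vars] using hu2
          subst huw
          have := gamma_vars δ c (ch j) _ (h5 j) u hu
          rw [Function.update_self] at this
          exact Finset.disjoint_left.mp (h3 k j hkj) hk2 this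
      · simp [DForm.vars]

end Helpers

/-- The closed-form complete reason `Γ^c[T]` is a monotone, ∨-decomposable NNF. -/
theorem gammaNNF_monotone_orDecomposable {C : Type} [DecidableEq V] [DecidableEq C]
    [∀ v, DecidableEq (σ v)] [∀ v, Fintype (σ v)]
    (T : DGraph V σ C) (hT : T.WTO (fun _ => Finset.univ))
    (δ : ∀ u, σ u) (c : C) (hc : T.classify δ = some c) :
    (T.gammaNNF δ c).isNNF ∧ (T.gammaNNF δ c).monotone ∧ (T.gammaNNF δ c).orDecomposable := by
  refine ⟨gamma_isNNF δ c T, ⟨gamma_isPositive δ c T, ?_⟩,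
    gamma_orDecomposable δ c T _ hT⟩
  intro v s t hs ht
  rw [gamma_stateOccurs δ c T v s hs, gamma_stateOccurs δ c T v t ht]
end
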